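/- If v = aw is a corotation of u = wa (with a ≠ 1, w a word, a a number), and in the cocharge labeling of u the final entry a is labeled by the number c, then the cocharge labeling of v equals (c+1) followed by the cocharge labeling of u with its last entry removed; in particular cocharge(v) = cocharge(u) + 1. -/

import Mathlib

/-- `w` is a standard word of length `n`: a permutation of `1, …, n`. -/
def IsStandardWord (n : ℕ) (w : List ℕ) : Prop :=
  w.Perm ((List.range n).map (· + 1))

/-- The cocharge label of the entry `i` of the standard word `w`:
the entry `1` is labeled `0`, and the entry `i+1` gets the label of `i`,
incremented by `1` exactly when `i+1` appears to the left of `i` in `w`. -/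
def entryLabel (w : List ℕ) : ℕ → ℕ
  | 0 => 0
  | 1 => 0
  | i + 2 => entryLabel w (i + 1) + (if w.idxOf (i + 2) < w.idxOf (i + 1) then 1 else 0)

/-- The cocharge labeling of `w`: each letter of `w` is replaced by its label. -/
def cochargeLabeling (w : List ℕ) : List ℕ := w.map (entryLabel w)

/-- The cocharge of `w`: the sum of the entries of its cocharge labeling. -/
def cocharge (w : List ℕ) : ℕ := (cochargeLabeling w).sum

/-- Swap the entries of `w` in (0-indexed) positions `j` and `j+1`. -/
def swapAdj (w : List ℕ) (j : ℕ) : List ℕ :=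
  (w.set j (w.getD (j + 1) 0)).set (j + 1) (w.getD j 0)


/-!
Moving `a` from the end of `u = w ++ [a]` to the front changes the relative order of a pair of
entries only when the pair contains `a`. Since the labels are built along the chain `1, 2, …, n`,
only the steps `a - 1 → a` and `a → a + 1` are affected: the first becomes a descent, so the label
of `a` goes up by one, and the second stops being one, so every later label is unchanged.
-/

namespace List

variable {α : Type*} [BEq α] [LawfulBEq α] {w : List α} {a x y : α}

theorem idxOf_cons_lt_idxOf_cons_iff (hx : x ≠ a) (hy : y ≠ a) :
    (a :: w).idxOf x < (a :: w).idxOf y ↔ w.idxOf x < w.idxOf y := by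
  simp [idxOf_cons_ne _ hx.symm, idxOf_cons_ne _ hy.symm]

theorem idxOf_concat_eq (hx : x ≠ a) :
    (w ++ [a]).idxOf x = if x ∈ w then w.idxOf x else w.length + 1 := by
  split_ifs with hxw
  · exact idxOf_append_of_mem hxw
  · simp [idxOf_append_of_notMem hxw, idxOf_cons_ne _ hx.symm]

theorem idxOf_concat_lt_idxOf_concat_iff (hx : x ≠ a) (hy : y ≠ a) :
    (w ++ [a]).idxOf x < (w ++ [a]).idxOf y ↔ w.idxOf x < w.idxOf y := by
  grind [idxOf_concat_eq, idxOf_lt_length_of_mem, idxOf_of_notMem]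

theorem idxOf_concat_lt_idxOf_concat_self (ha : a ∉ w) (hy : y ∈ w) :
    (w ++ [a]).idxOf y < (w ++ [a]).idxOf a := by
  rw [idxOf_append_of_mem hy, idxOf_append_of_notMem ha, idxOf_cons_self]
  exact idxOf_lt_length_of_mem hy

end List

namespace IsStandardWord

variable {n : ℕ} {u : List ℕ}

theorem mem_iff (hu : IsStandardWord n u) {x : ℕ} : x ∈ u ↔ 1 ≤ x ∧ x ≤ n := by
  rw [List.Perm.mem_iff hu]
  simp only [List.mem_map, List.mem_range]
  constructor
  · rintro ⟨k, hk, rfl⟩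
    omega
  · rintro ⟨h1, h2⟩
    exact ⟨x - 1, by omega, by omega⟩

theorem nodup (hu : IsStandardWord n u) : u.Nodup :=
  hu.symm.nodup ((List.nodup_range).map (add_left_injective 1))

theorem notMem_of_append_singleton {w : List ℕ} {a : ℕ} (hu : IsStandardWord n (w ++ [a])) :
    a ∉ w :=
  (List.nodup_append_comm.mp hu.nodup).notMem

end IsStandardWord

section Corotation

variable {n : ℕ} {w : List ℕ} {a : ℕ}

theorem entryLabel_corotation (hu : IsStandardWord n (w ++ [a])) (ha : a ≠ 1) {k : ℕ}
    (hk : k ≤ n) :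
    entryLabel (a :: w) k = entryLabel (w ++ [a]) k + if k = a then 1 else 0 := by
  have haw : a ∉ w := hu.notMem_of_append_singleton
  have ha2 : 2 ≤ a := by have := hu.mem_iff.mp (by simp : a ∈ w ++ [a]); omega
  have hmem {x : ℕ} (h1 : 1 ≤ x) (hxn : x ≤ n) (hxa : x ≠ a) : x ∈ w := by
    simpa [hxa] using hu.mem_iff.mpr ⟨h1, hxn⟩
  induction k with
  | zero => rw [entryLabel, entryLabel, if_neg (by omega)]
  | succ k ih =>
    rcases k with _ | i
    · rw [entryLabel, entryLabel, if_neg (by omega)]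
    rw [entryLabel, entryLabel, ih (by omega)]
    by_cases hA : i + 2 = a
    · have hlt := List.idxOf_concat_lt_idxOf_concat_self haw
        (hmem (x := i + 1) (by omega) (by omega) (by omega))
      subst hA
      simp [List.idxOf_cons_ne, hlt.not_gt]
    by_cases hB : i + 1 = a
    · have hlt := List.idxOf_concat_lt_idxOf_concat_self haw (hmem (by omega) hk hA)
      subst hB
      simp [List.idxOf_cons_ne, hlt]
    · simp only [List.idxOf_cons_lt_idxOf_cons_iff hA hB,
        List.idxOf_concat_lt_idxOf_concat_iff hA hB, hA, hB, if_false]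
      omega

end Corotation

/-- If `v = a :: w` is a corotation of the standard word `u = w ++ [a]`
(so `a ≠ 1`), and the last entry `a` of `u` is labeled `c` in the cocharge
labeling of `u`, then the cocharge labeling of `v` is `c + 1` followed by the
cocharge labeling of `u` with its last entry removed; in particular
`cocharge v = cocharge u + 1`. -/
theorem cochargeLabeling_corotation (n : ℕ) (w : List ℕ) (a : ℕ) (c : ℕ)
    (hu : IsStandardWord n (w ++ [a])) (ha : a ≠ 1)
    (hc : (cochargeLabeling (w ++ [a])).getLastD 0 = c) :
    cochargeLabeling (a :: w) = (c + 1) :: (cochargeLabeling (w ++ [a])).dropLast ∧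
      cocharge (a :: w) = cocharge (w ++ [a]) + 1 := by
  have hca : entryLabel (w ++ [a]) a = c := by
    rw [← hc]
    simp [cochargeLabeling]
  have hlabel_u : cochargeLabeling (w ++ [a]) = w.map (entryLabel (w ++ [a])) ++ [c] := by
    simp [cochargeLabeling, hca]
  have hlabel_v : cochargeLabeling (a :: w) = (c + 1) :: w.map (entryLabel (w ++ [a])) := by
    have hle {x : ℕ} (hx : x ∈ w ++ [a]) : x ≤ n := (hu.mem_iff.mp hx).2
    have haw : a ∉ w := hu.notMem_of_append_singleton
    rw [cochargeLabeling, List.map_cons, entryLabel_corotation hu ha (hle (by simp)), if_pos rfl,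
      hca]
    congr 1
    refine List.map_congr_left fun x hx => ?_
    rw [entryLabel_corotation hu ha (hle (by simp [hx])), if_neg (by rintro rfl; exact haw hx),
      add_zero]
  refine ⟨by rw [hlabel_v, hlabel_u, List.dropLast_concat], ?_⟩
  rw [cocharge, cocharge, hlabel_v, hlabel_u, List.sum_cons, List.sum_append, List.sum_singleton]
  omega
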